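/- Let ξ(1),...,ξ(n) be a martingale difference sequence with each ξ(i) ∈ L^p for p ≥ 2, and let b(1),...,b(n) be real (deterministic) numbers with Σ_{i=1}^n b(i)^2 = 1. Then |Σ_{i=1}^n b(i)ξ(i)|_p ≤ (p-1) · sup_i |ξ(i)|_p. -/

import Mathlib

/-!
For `p ≥ 2`, `X` measurable with respect to `m` and `E[Y | m] = 0`, Rio's inequality
`‖X + Y‖_p² ≤ ‖X‖_p² + (p - 1) ‖Y‖_p²` comes from the function `f t = ‖X + t Y‖_p²`:
`f' 0 = 0` because `Y` is orthogonal to every `m`-measurable function, and Hölder's inequality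
gives `f'' ≤ 2 (p - 1) ‖Y‖_p²`. Adding the martingale differences `bᵢ ξᵢ` one at a time yields
`‖∑ bᵢ ξᵢ‖_p² ≤ (p - 1) ∑ bᵢ² ‖ξᵢ‖_p² ≤ (p - 1) maxᵢ ‖ξᵢ‖_p²`, and `√(p - 1) ≤ p - 1`.
-/

open MeasureTheory Finset Filter Topology Real

theorem rpow_mul_rpow_le_rpow_add_rpow_add {a b q r : ℝ} (ha : 0 ≤ a) (hb : 0 ≤ b)
    (hq : 0 ≤ q) (hr : 0 ≤ r) (hqr : q + r ≠ 0) : a ^ q * b ^ r ≤ a ^ (q + r) + b ^ (q + r) := by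
  have hm : 0 ≤ max a b := ha.trans (le_max_left a b)
  calc a ^ q * b ^ r ≤ max a b ^ q * max a b ^ r := by gcongr <;> simp
    _ = max a b ^ (q + r) := (rpow_add' hm hqr).symm
    _ ≤ a ^ (q + r) + b ^ (q + r) := by
      rcases max_choice a b with h | h <;> rw [h]
      · exact le_add_of_nonneg_right (by positivity)
      · exact le_add_of_nonneg_left (by positivity)

theorem abs_comp_add_mul_mul_pow_le {p C x y s T : ℝ} {k : ℕ} {h : ℝ → ℝ} (hk : k ≤ p)
    (hp : 0 < p) (hh : ∀ v, |h v| ≤ C * |v| ^ (p - k)) (hs : |s| ≤ T) :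
    |h (x + s * y) * y ^ k| ≤ C * ((|x| + T * |y|) ^ p + |y| ^ p) := by
  have hC : 0 ≤ C := by simpa using (abs_nonneg _).trans (hh 1)
  have hxy : |x + s * y| ≤ |x| + T * |y| :=
    (abs_add_le _ _).trans (by rw [abs_mul]; gcongr)
  have hyoung := rpow_mul_rpow_le_rpow_add_rpow_add (q := p - k) (r := k)
    ((abs_nonneg _).trans hxy) (abs_nonneg y) (by linarith) (Nat.cast_nonneg k) (by linarith)
  rw [sub_add_cancel, rpow_natCast] at hyoung
  rw [abs_mul, abs_pow]
  calc |h (x + s * y)| * |y| ^ k ≤ C * |x + s * y| ^ (p - k) * |y| ^ k := by gcongr; exact hh _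
    _ ≤ C * (|x| + T * |y|) ^ (p - k) * |y| ^ k := by gcongr
    _ ≤ C * ((|x| + T * |y|) ^ p + |y| ^ p) := by rw [mul_assoc]; gcongr

theorem hasDerivAt_abs_rpow_sub_two_mul_self {p : ℝ} (hp : 2 ≤ p) (x : ℝ) :
    HasDerivAt (fun v => |v| ^ (p - 2) * v) ((p - 1) * |x| ^ (p - 2)) x := by
  have hcont : Continuous fun v : ℝ => |v| ^ (p - 2) :=
    continuous_abs.rpow_const fun _ => Or.inr (by linarith)
  refine hasDerivAt_of_hasDerivAt_of_ne' (x := 0) (fun y hy => ?_)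
    (hcont.mul continuous_id).continuousAt (hcont.continuousAt.const_mul _) x
  have hy' : |y| ≠ 0 := abs_ne_zero.2 hy
  refine (((hasDerivAt_abs hy).rpow_const (p := p - 2) (Or.inl hy')).mul
    (hasDerivAt_id' y)).congr_deriv ?_
  have e : |y| ^ (p - 2) = |y| ^ (p - 2 - 1) * |y| := by rw [← rpow_add_one hy']; ring_nf
  rw [mul_one, mul_right_comm, mul_right_comm _ _ y, sign_mul_self]
  linear_combination (2 - p) * e

theorem sub_le_half_of_second_deriv_le {f f' f'' : ℝ → ℝ} {c : ℝ}
    (hf : ∀ t, HasDerivAt f (f' t) t) (hf' : ∀ t, HasDerivAt f' (f'' t) t) (h0 : f' 0 = 0)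
    (hc : ∀ t, f'' t ≤ c) : f 1 - f 0 ≤ c / 2 := by
  set ψ : ℝ → ℝ := fun t => f t - c / 2 * t ^ 2
  have hψ : ∀ t, HasDerivAt ψ (f' t - c * t) t := fun t => by
    refine ((hf t).fun_sub ((hasDerivAt_pow 2 t).const_mul (c / 2))).congr_deriv ?_
    push_cast; ring
  have hψ' : ∀ t, HasDerivAt (fun t => f' t - c * t) (f'' t - c) t := fun t => by
    simpa using (hf' t).fun_sub ((hasDerivAt_id' t).const_mul c)
  have hanti : Antitone fun t => f' t - c * t :=
    antitone_of_deriv_nonpos (fun t => (hψ' t).differentiableAt)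
      fun t => by rw [(hψ' t).deriv]; linarith [hc t]
  obtain ⟨τ, hτ, hslope⟩ := exists_hasDerivAt_eq_slope ψ _ zero_lt_one
    (fun t _ => (hψ t).continuousAt.continuousWithinAt) fun t _ => hψ t
  have hψ10 : ψ 1 - ψ 0 ≤ 0 := by
    have := hanti hτ.1.le
    simp only [h0, mul_zero, sub_zero] at this
    rw [sub_zero, div_one] at hslope
    linarith
  simp only [ψ] at hψ10
  linarith

section SecondDeriv

variable {p B : ℝ} {g g' g'' : ℝ → ℝ}

/- Adding `ε > 0` keeps `g + ε` away from `0`, where `x ↦ x ^ (2 / p)` is not differentiable. -/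
theorem add_rpow_two_div_sub_le_of_second_deriv_le (hp : 2 ≤ p) (hB : 0 ≤ B) (hg0 : ∀ t, 0 ≤ g t)
    (hg : ∀ t, HasDerivAt g (g' t) t) (hg' : ∀ t, HasDerivAt g' (g'' t) t) (h0 : g' 0 = 0)
    (hg'' : ∀ t, g'' t ≤ p * (p - 1) * (g t ^ ((p - 2) / p) * B)) {ε : ℝ} (hε : 0 < ε) :
    (g 1 + ε) ^ (2 / p) - (g 0 + ε) ^ (2 / p) ≤ (p - 1) * B := by
  have hp0 : 0 < p := by linarith
  have hr : 2 / p ≤ 1 := (div_le_one hp0).2 hp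
  have hpos : ∀ t, 0 < g t + ε := fun t => by linarith [hg0 t]
  have hG : ∀ t, HasDerivAt (fun s => g s + ε) (g' t) t := fun t => (hg t).add_const ε
  have hf : ∀ t, HasDerivAt (fun s => (g s + ε) ^ (2 / p))
      (g' t * (2 / p) * (g t + ε) ^ (2 / p - 1)) t :=
    fun t => (hG t).rpow_const (Or.inl (hpos t).ne')
  have hf' : ∀ t, HasDerivAt (fun s => g' s * (2 / p) * (g s + ε) ^ (2 / p - 1))
      (g'' t * (2 / p) * (g t + ε) ^ (2 / p - 1)
        + g' t * (2 / p) * (g' t * (2 / p - 1) * (g t + ε) ^ (2 / p - 1 - 1))) t :=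
    fun t => ((hg' t).mul_const _).mul ((hG t).rpow_const (Or.inl (hpos t).ne'))
  refine (sub_le_half_of_second_deriv_le (c := 2 * (p - 1) * B) hf hf' (by simp [h0])
    fun t => ?_).trans_eq (by ring)
  have hconcave : g' t * (2 / p) * (g' t * (2 / p - 1) * (g t + ε) ^ (2 / p - 1 - 1)) ≤ 0 := by
    have : 0 ≤ g' t * g' t * (g t + ε) ^ (2 / p - 1 - 1) * (2 / p) :=
      mul_nonneg (mul_nonneg (mul_self_nonneg _) (rpow_nonneg (hpos t).le _)) (by positivity)
    nlinarith
  have hcancel : (g t + ε) ^ ((p - 2) / p) * (g t + ε) ^ (2 / p - 1) = 1 := by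
    rw [← rpow_add (hpos t), show (p - 2) / p + (2 / p - 1) = 0 by field_simp; ring, rpow_zero]
  have hg''ε : g'' t ≤ p * (p - 1) * ((g t + ε) ^ ((p - 2) / p) * B) := by
    refine (hg'' t).trans ?_
    have := hg0 t
    gcongr
    · nlinarith
    · linarith
  have hmain : g'' t * (2 / p) * (g t + ε) ^ (2 / p - 1) ≤ 2 * (p - 1) * B := by
    calc g'' t * (2 / p) * (g t + ε) ^ (2 / p - 1)
        ≤ p * (p - 1) * ((g t + ε) ^ ((p - 2) / p) * B) * (2 / p) * (g t + ε) ^ (2 / p - 1) := by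
          have := hpos t; gcongr
      _ = 2 * (p - 1) * B * ((g t + ε) ^ ((p - 2) / p) * (g t + ε) ^ (2 / p - 1)) := by
          field_simp
      _ = 2 * (p - 1) * B := by rw [hcancel, mul_one]
  linarith

theorem rpow_two_div_sub_le_of_second_deriv_le (hp : 2 ≤ p) (hB : 0 ≤ B) (hg0 : ∀ t, 0 ≤ g t)
    (hg : ∀ t, HasDerivAt g (g' t) t) (hg' : ∀ t, HasDerivAt g' (g'' t) t) (h0 : g' 0 = 0)
    (hg'' : ∀ t, g'' t ≤ p * (p - 1) * (g t ^ ((p - 2) / p) * B)) :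
    g 1 ^ (2 / p) - g 0 ^ (2 / p) ≤ (p - 1) * B := by
  have hcont : Continuous fun ε : ℝ => (g 1 + ε) ^ (2 / p) - (g 0 + ε) ^ (2 / p) := by
    have : 0 ≤ 2 / p := by positivity
    fun_prop (discharger := exact Or.inr this)
  have hlim : Tendsto (fun ε : ℝ => (g 1 + ε) ^ (2 / p) - (g 0 + ε) ^ (2 / p)) (𝓝[>] 0)
      (𝓝 (g 1 ^ (2 / p) - g 0 ^ (2 / p))) := by
    simpa using (hcont.tendsto 0).mono_left nhdsWithin_le_nhds
  exact le_of_tendsto hlim (eventually_nhdsWithin_of_forall fun ε hε =>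
    add_rpow_two_div_sub_le_of_second_deriv_le hp hB hg0 hg hg' h0 hg'' hε)

end SecondDeriv

section Moments

variable {Ω : Type*} {m0 : MeasurableSpace Ω} {μ : Measure Ω} {p : ℝ} {X Y : Ω → ℝ}

theorem MeasureTheory.MemLp.integrable_abs_rpow (hX : MemLp X (ENNReal.ofReal p) μ)
    (hp : 0 < p) : Integrable (fun ω => |X ω| ^ p) μ := by
  simpa [ENNReal.toReal_ofReal hp.le] using
    hX.integrable_norm_rpow (by simpa using hp) ENNReal.ofReal_ne_top

theorem integrable_abs_add_mul_abs_rpow_add (hX : MemLp X (ENNReal.ofReal p) μ)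
    (hY : MemLp Y (ENNReal.ofReal p) μ) (hp : 0 < p) {T : ℝ} (hT : 0 ≤ T) :
    Integrable (fun ω => (|X ω| + T * |Y ω|) ^ p + |Y ω| ^ p) μ := by
  refine Integrable.add ?_ (hY.integrable_abs_rpow hp)
  refine ((hX.abs.add (hY.abs.const_mul T)).integrable_abs_rpow hp).congr
    (ae_of_all _ fun ω => ?_)
  simp only [Pi.add_apply, Pi.abs_apply]
  rw [abs_of_nonneg (by positivity)]

theorem hasDerivAt_integral_comp_add_mul_mul_pow {C C' : ℝ} {k : ℕ} (hk : (k : ℝ) + 1 ≤ p)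
    {h h' : ℝ → ℝ} (hh : ∀ v, HasDerivAt h (h' v) v) (hh' : Continuous h')
    (hbound : ∀ v, |h v| ≤ C * |v| ^ (p - k)) (hbound' : ∀ v, |h' v| ≤ C' * |v| ^ (p - (k + 1)))
    (hX : MemLp X (ENNReal.ofReal p) μ) (hY : MemLp Y (ENNReal.ofReal p) μ) (t : ℝ) :
    Integrable (fun ω => h' (X ω + t * Y ω) * Y ω ^ (k + 1)) μ ∧
      HasDerivAt (fun s => ∫ ω, h (X ω + s * Y ω) * Y ω ^ k ∂μ)
        (∫ ω, h' (X ω + t * Y ω) * Y ω ^ (k + 1) ∂μ) t := by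
  have hp : 0 < p := by linarith [(Nat.cast_nonneg k : (0 : ℝ) ≤ k)]
  have hdom := integrable_abs_add_mul_abs_rpow_add hX hY hp (by positivity : 0 ≤ |t| + 1)
  have hline : ∀ s, AEStronglyMeasurable (fun ω => X ω + s * Y ω) μ :=
    fun s => hX.1.add (hY.1.const_mul s)
  have hcont : Continuous h := continuous_iff_continuousAt.2 fun v => (hh v).continuousAt
  have hF : Integrable (fun ω => h (X ω + t * Y ω) * Y ω ^ k) μ :=
    (hdom.const_mul C).mono' ((hcont.comp_aestronglyMeasurable (hline t)).mul (hY.1.pow k))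
      (ae_of_all _ fun ω => abs_comp_add_mul_mul_pow_le (by linarith) hp hbound
        (le_add_of_nonneg_right zero_le_one))
  refine hasDerivAt_integral_of_dominated_loc_of_deriv_le
    (F := fun s ω => h (X ω + s * Y ω) * Y ω ^ k)
    (F' := fun s ω => h' (X ω + s * Y ω) * Y ω ^ (k + 1)) (Metric.ball_mem_nhds t one_pos)
    (Eventually.of_forall fun s => (hcont.comp_aestronglyMeasurable (hline s)).mul (hY.1.pow k))
    hF ((hh'.comp_aestronglyMeasurable (hline t)).mul (hY.1.pow (k + 1)))
    (ae_of_all _ fun ω s hs => ?_) (hdom.const_mul C') (ae_of_all _ fun ω s _ => ?_)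
  · have hsT : |s| ≤ |t| + 1 := by
      have := abs_sub_abs_le_abs_sub s t
      rw [Metric.mem_ball, Real.dist_eq] at hs
      linarith
    exact abs_comp_add_mul_mul_pow_le (by push_cast; linarith) hp
      (by simpa using hbound') hsT
  · simpa [pow_succ', mul_assoc] using
      ((hh (X ω + s * Y ω)).comp s ((hasDerivAt_mul_const (Y ω)).const_add (X ω))).mul_const
        (Y ω ^ k)

theorem integral_mul_eq_zero_of_condExp_eq_zero {m : MeasurableSpace Ω} (hm : m ≤ m0)
    [SigmaFinite (μ.trim hm)] {φ : Ω → ℝ} (hφ : StronglyMeasurable[m] φ)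
    (hφY : Integrable (fun ω => φ ω * Y ω) μ) (hY : Integrable Y μ) (hY0 : μ[Y|m] =ᵐ[μ] 0) :
    ∫ ω, φ ω * Y ω ∂μ = 0 := by
  rw [show (fun ω => φ ω * Y ω) = φ * Y from rfl, ← integral_condExp hm]
  refine (integral_congr_ae ?_).trans (integral_zero Ω ℝ)
  filter_upwards [condExp_mul_of_stronglyMeasurable_left hφ hφY hY, hY0] with ω h1 h2
  simp [h1, h2]

theorem integral_abs_rpow_sub_two_mul_sq_le (hp : 2 ≤ p) (hX : MemLp X (ENNReal.ofReal p) μ)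
    (hY : MemLp Y (ENNReal.ofReal p) μ) :
    ∫ ω, |X ω| ^ (p - 2) * Y ω ^ 2 ∂μ
      ≤ (∫ ω, |X ω| ^ p ∂μ) ^ ((p - 2) / p) * (∫ ω, |Y ω| ^ p ∂μ) ^ (2 / p) := by
  rcases hp.eq_or_lt with rfl | hp
  · simp
  have hpq : HolderConjugate (p / (p - 2)) (p / 2) := by
    refine holderConjugate_iff.2 ⟨?_, ?_⟩
    · rw [lt_div_iff₀ (by linarith)]; linarith
    · field_simp; ring
  have hf : MemLp (fun ω => |X ω| ^ (p - 2)) (ENNReal.ofReal (p / (p - 2))) μ := by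
    have h := hX.norm_rpow_div (ENNReal.ofReal (p - 2))
    rw [ENNReal.toReal_ofReal (by linarith), ← ENNReal.ofReal_div_of_pos (by linarith)] at h
    simpa using h
  have hg : MemLp (fun ω => Y ω ^ 2) (ENNReal.ofReal (p / 2)) μ := by
    have h := hY.norm_rpow_div (ENNReal.ofReal 2)
    rw [ENNReal.toReal_ofReal zero_le_two, ← ENNReal.ofReal_div_of_pos two_pos] at h
    simpa using h
  have hH := integral_mul_le_Lp_mul_Lq_of_nonneg hpq (ae_of_all _ fun ω => by positivity)
    (ae_of_all _ fun ω => by positivity) hf hg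
  have e1 : ∀ ω, (|X ω| ^ (p - 2)) ^ (p / (p - 2)) = |X ω| ^ p := fun ω => by
    rw [← rpow_mul (abs_nonneg _), mul_div_cancel₀ _ (by linarith)]
  have e2 : ∀ ω, (Y ω ^ 2) ^ (p / 2) = |Y ω| ^ p := fun ω => by
    rw [← sq_abs, ← rpow_natCast, ← rpow_mul (abs_nonneg _)]
    push_cast
    rw [mul_div_cancel₀ _ two_ne_zero]
  simpa only [e1, e2, one_div_div] using hH

theorem rio_inequality [IsFiniteMeasure μ] {m : MeasurableSpace Ω} (hm : m ≤ m0) (hp : 2 ≤ p)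
    (hX : StronglyMeasurable[m] X) (hXp : MemLp X (ENNReal.ofReal p) μ)
    (hYp : MemLp Y (ENNReal.ofReal p) μ) (hY : μ[Y|m] =ᵐ[μ] 0) :
    (∫ ω, |X ω + Y ω| ^ p ∂μ) ^ (2 / p)
      ≤ (∫ ω, |X ω| ^ p ∂μ) ^ (2 / p) + (p - 1) * (∫ ω, |Y ω| ^ p ∂μ) ^ (2 / p) := by
  have hp0 : 0 < p := by linarith
  have hcont : Continuous fun v : ℝ => |v| ^ (p - 2) :=
    continuous_abs.rpow_const fun _ => Or.inr (by linarith)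
  have habs : ∀ v : ℝ, |p * |v| ^ (p - 2) * v| = p * |v| ^ (p - 1) := fun v => by
    rw [abs_mul, abs_mul, abs_of_pos hp0, abs_of_nonneg (by positivity), mul_assoc,
      ← rpow_add_one' (abs_nonneg v) (by linarith)]
    ring_nf
  set φ : ℝ → ℝ := fun v => p * |v| ^ (p - 2) * v
  have hd1 := hasDerivAt_integral_comp_add_mul_mul_pow (k := 0) (C := 1) (C' := p)
    (h := fun v => |v| ^ p) (h' := φ) (by push_cast; linarith)
    (fun v => hasDerivAt_abs_rpow v (by linarith))
    ((continuous_const.mul hcont).mul continuous_id)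
    (fun v => by simp [abs_of_nonneg (rpow_nonneg (abs_nonneg v) p)])
    (fun v => by simp [φ, habs]) hXp hYp
  have hd2 := hasDerivAt_integral_comp_add_mul_mul_pow (k := 1) (C := p) (C' := p * (p - 1))
    (h := φ) (h' := fun v => p * ((p - 1) * |v| ^ (p - 2))) (by push_cast; linarith)
    (fun v => by simpa [φ, mul_assoc] using (hasDerivAt_abs_rpow_sub_two_mul_self hp v).const_mul p)
    (continuous_const.mul (continuous_const.mul hcont)) (fun v => by simp [φ, habs])
    (fun v => by
      rw [abs_mul, abs_mul, abs_of_pos hp0, abs_of_nonneg (by linarith),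
        abs_of_nonneg (by positivity)]
      norm_num [mul_assoc]) hXp hYp
  have hg : ∀ t, HasDerivAt (fun s => ∫ ω, |X ω + s * Y ω| ^ p ∂μ)
      (∫ ω, φ (X ω + t * Y ω) * Y ω ^ 1 ∂μ) t := fun t => by
    simpa only [pow_zero, mul_one] using (hd1 t).2
  have horth : ∫ ω, φ (X ω + 0 * Y ω) * Y ω ^ 1 ∂μ = 0 := by
    simp only [zero_mul, add_zero, pow_one]
    refine integral_mul_eq_zero_of_condExp_eq_zero hm
      ((continuous_const.mul hcont).mul continuous_id |>.comp_stronglyMeasurable hX) ?_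
      (hYp.integrable (by simpa using hp.trans' one_le_two)) hY
    simpa using (hd1 0).1
  have hcurv : ∀ t, ∫ ω, p * ((p - 1) * |X ω + t * Y ω| ^ (p - 2)) * Y ω ^ (1 + 1) ∂μ
      ≤ p * (p - 1) * ((∫ ω, |X ω + t * Y ω| ^ p ∂μ) ^ ((p - 2) / p)
        * (∫ ω, |Y ω| ^ p ∂μ) ^ (2 / p)) := fun t => by
    simp_rw [mul_assoc, integral_const_mul]
    gcongr
    · nlinarith
    · exact integral_abs_rpow_sub_two_mul_sq_le hp (hXp.add (hYp.const_mul t)) hYp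
  have key := rpow_two_div_sub_le_of_second_deriv_le hp (by positivity) (fun t => by positivity) hg
    (fun t => (hd2 t).2) horth hcurv
  simp only [one_mul, zero_mul, add_zero] at key
  linarith

theorem integral_abs_const_mul_rpow_rpow_two_div (hp : 0 < p) (b : ℝ) (X : Ω → ℝ) :
    (∫ ω, |b * X ω| ^ p ∂μ) ^ (2 / p) = b ^ 2 * (∫ ω, |X ω| ^ p ∂μ) ^ (2 / p) := by
  simp_rw [abs_mul, mul_rpow (abs_nonneg _) (abs_nonneg _)]
  rw [integral_const_mul, mul_rpow (by positivity) (by positivity), ← rpow_mul (abs_nonneg _),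
    mul_div_cancel₀ _ hp.ne', rpow_two, sq_abs]

theorem sum_martingaleDifference_rpow_two_div_le [IsFiniteMeasure μ] {ℱ : ℕ → MeasurableSpace Ω}
    (hℱmono : Monotone ℱ) (hℱle : ∀ i, ℱ i ≤ m0) {d : ℕ → Ω → ℝ}
    (hadapted : ∀ i, StronglyMeasurable[ℱ i] (d i))
    (hmds : ∀ i, 1 ≤ i → μ[d i | ℱ (i - 1)] =ᵐ[μ] 0) (hp : 2 ≤ p)
    (hLp : ∀ i, MemLp (d i) (ENNReal.ofReal p) μ) (n : ℕ) :
    (∫ ω, |∑ i ∈ Icc 1 n, d i ω| ^ p ∂μ) ^ (2 / p)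
      ≤ (p - 1) * ∑ i ∈ Icc 1 n, (∫ ω, |d i ω| ^ p ∂μ) ^ (2 / p) := by
  induction n with
  | zero => simp [zero_rpow (by linarith : p ≠ 0), zero_rpow (by positivity : 2 / p ≠ 0)]
  | succ n ih =>
    have hS : StronglyMeasurable[ℱ n] fun ω => ∑ i ∈ Icc 1 n, d i ω :=
      Finset.stronglyMeasurable_fun_sum _ fun i hi =>
        (hadapted i).mono (hℱmono (mem_Icc.1 hi).2)
    have hrio := rio_inequality (hℱle n) hp hS (memLp_finsetSum _ fun i _ => hLp i)
      (hLp (n + 1)) (by simpa using hmds (n + 1) (Nat.le_add_left 1 n))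
    simp only [sum_Icc_succ_top (Nat.le_add_left 1 n)]
    linarith

end Moments

/-- For a martingale difference sequence `ξ 1, …, ξ n` in `L^p`, `p ≥ 2`,
and deterministic reals `b 1, …, b n` with `∑ b i ^ 2 = 1`,
`|∑ b i ξ i|_p ≤ (p-1) · sup_i |ξ i|_p`. -/
theorem martingale_transform_deterministic_bound
    {Ω : Type*} {m0 : MeasurableSpace Ω} (μ : Measure Ω) [IsProbabilityMeasure μ]
    (ℱ : ℕ → MeasurableSpace Ω) (hℱmono : Monotone ℱ) (hℱle : ∀ i, ℱ i ≤ m0)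
    (ξ : ℕ → Ω → ℝ)
    (hadapted : ∀ i, StronglyMeasurable[ℱ i] (ξ i))
    (hmds : ∀ i, 1 ≤ i → μ[ξ i | ℱ (i - 1)] =ᵐ[μ] 0)
    (p : ℝ) (hp : 2 ≤ p)
    (n : ℕ) (hn : 1 ≤ n)
    (hLp : ∀ i, MemLp (ξ i) (ENNReal.ofReal p) μ)
    (b : ℕ → ℝ) (hb : ∑ i ∈ Icc 1 n, (b i) ^ 2 = 1) :
    (∫ x, |∑ i ∈ Icc 1 n, b i * ξ i x| ^ p ∂μ) ^ (1 / p)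
      ≤ (p - 1) *
        (Icc 1 n).sup' (Finset.nonempty_Icc.2 hn)
          (fun i => (∫ x, |ξ i x| ^ p ∂μ) ^ (1 / p)) := by
  have hp0 : 0 < p := by linarith
  have hsq : ∀ {A : ℝ}, 0 ≤ A → (A ^ (1 / p)) ^ 2 = A ^ (2 / p) := fun hA => by
    rw [← rpow_natCast, ← rpow_mul hA]; ring_nf
  set M := (Icc 1 n).sup' (nonempty_Icc.2 hn) fun i => (∫ x, |ξ i x| ^ p ∂μ) ^ (1 / p)
  have hM : ∀ i ∈ Icc 1 n, (∫ x, |ξ i x| ^ p ∂μ) ^ (1 / p) ≤ M := fun i hi =>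
    le_sup' (fun i => (∫ x, |ξ i x| ^ p ∂μ) ^ (1 / p)) hi
  have hM0 : 0 ≤ M :=
    (rpow_nonneg (integral_nonneg fun _ => by positivity) _).trans (hM n (right_mem_Icc.2 hn))
  have hsum := sum_martingaleDifference_rpow_two_div_le hℱmono hℱle
    (d := fun i x => b i * ξ i x) (fun i => (hadapted i).const_mul (b i))
    (fun i hi => by
      rw [show (fun x => b i * ξ i x) = b i • ξ i from rfl]
      filter_upwards [condExp_smul (m := ℱ (i - 1)) (μ := μ) (b i) (ξ i), hmds i hi] with x h1 h2
      simp [h1, h2]) hp (fun i => (hLp i).const_mul (b i)) n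
  simp only [integral_abs_const_mul_rpow_rpow_two_div hp0] at hsum
  rw [← pow_le_pow_iff_left₀ (by positivity) (mul_nonneg (by linarith) hM0) two_ne_zero,
    hsq (by positivity)]
  calc _ ≤ (p - 1) * ∑ i ∈ Icc 1 n, b i ^ 2 * (∫ x, |ξ i x| ^ p ∂μ) ^ (2 / p) := hsum
    _ ≤ (p - 1) * ∑ i ∈ Icc 1 n, b i ^ 2 * M ^ 2 := by
      gcongr with i hi
      · linarith
      · rw [← hsq (by positivity)]; gcongr; exact hM i hi
    _ = (p - 1) * M ^ 2 := by rw [← sum_mul, hb, one_mul]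
    _ ≤ ((p - 1) * M) ^ 2 := by nlinarith
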